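/- (Massart's lemma) For any finite set {a^{(1)},...,a^{(m)}} ⊂ R^n and a Rademacher sequence U_{1:n}, E[ max_{1≤k≤m} sum_{j=1}^n U_j a^{(k)}_j ] ≤ ( max_{1≤k≤m} |a^{(k)}|_2 ) · sqrt(2 log m). -/
import Mathlib


open Finset

noncomputable def sgn {n : ℕ} (u : Fin n → Bool) (k : Fin n) : ℝ := if u k then 1 else -1

lemma sum_sgn {n : ℕ} (j : Fin n) : ∑ u : Fin n → Bool, sgn u j = 0 := by
  classical
  apply Finset.sum_ninvolution (fun u => Function.update u j (!u j))
  · intro u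
    cases h : u j <;> simp [sgn, Function.update_self, h]
  · intro u _ he
    have := congrFun he j
    simp [Function.update_self] at this
  · intro u; exact mem_univ _
  · intro u
    funext i
    by_cases h : i = j
    · subst h; simp [Function.update_self]
    · simp [Function.update_of_ne h]

lemma mgf_sum {n : ℕ} (c : Fin n → ℝ) :
    ∑ u : Fin n → Bool, Real.exp (∑ j, sgn u j * c j)
      = 2 ^ n * ∏ j, Real.cosh (c j) := by
  classical
  have h1 : ∀ u : Fin n → Bool, Real.exp (∑ j, sgn u j * c j)
      = ∏ j, Real.exp ((if u j then (1:ℝ) else -1) * c j) := by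
    intro u; rw [Real.exp_sum]; rfl
  simp_rw [h1]
  rw [← Fintype.prod_sum (fun (j : Fin n) (b : Bool) => Real.exp ((if b then (1:ℝ) else -1) * c j))]
  have h2 : ∀ j : Fin n, (∑ b : Bool, Real.exp ((if b then (1:ℝ) else -1) * c j))
      = 2 * Real.cosh (c j) := by
    intro j
    simp [Real.cosh_eq]
    ring
  simp_rw [h2]
  rw [Finset.prod_mul_distrib]
  simp [Finset.card_univ]

set_option maxHeartbeats 1000000 in
lemma massart_aux {n m : ℕ} (hm : 0 < m) (hne : (univ : Finset (Fin m)).Nonempty)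
    (a : Fin m → Fin n → ℝ) {B L : ℝ} (hL : 0 < L) (hB0 : 0 ≤ B)
    (hB : ∀ k : Fin m, Real.sqrt (∑ j, a k j ^ 2) ≤ B) :
    (∑ u : Fin n → Bool, (univ.sup' hne fun k => ∑ j, sgn u j * a k j)) / 2 ^ n
      ≤ Real.log m / L + L * B ^ 2 / 2 := by
  classical
  set g : (Fin n → Bool) → ℝ := fun u => univ.sup' hne fun k => ∑ j, sgn u j * a k j with hg
  have step1 : ∀ u : Fin n → Bool,
      Real.exp (L * g u) ≤ ∑ k : Fin m, Real.exp (∑ j, sgn u j * (L * a k j)) := by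
    intro u
    obtain ⟨k0, -, hk0⟩ := Finset.exists_mem_eq_sup' hne fun k => ∑ j, sgn u j * a k j
    have e : L * g u = ∑ j, sgn u j * (L * a k0 j) := by
      rw [hg]
      simp only
      rw [hk0, Finset.mul_sum]
      exact Finset.sum_congr rfl fun j _ => by ring
    rw [e]
    exact Finset.single_le_sum (f := fun k => Real.exp (∑ j, sgn u j * (L * a k j))) (fun k _ => (Real.exp_pos _).le) (mem_univ k0)
  have sqbound : ∀ k : Fin m, ∑ j, a k j ^ 2 ≤ B ^ 2 := by
    intro k
    have h1 : Real.sqrt (∑ j, a k j ^ 2) ^ 2 ≤ B ^ 2 :=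
      pow_le_pow_left₀ (Real.sqrt_nonneg _) (hB k) 2
    rwa [Real.sq_sqrt (Finset.sum_nonneg fun j _ => sq_nonneg _)] at h1
  have step2 : ∑ u : Fin n → Bool, ∑ k : Fin m, Real.exp (∑ j, sgn u j * (L * a k j))
      ≤ m * 2 ^ n * Real.exp (L ^ 2 * B ^ 2 / 2) := by
    rw [Finset.sum_comm]
    have hk : ∀ k : Fin m,
        ∑ u : Fin n → Bool, Real.exp (∑ j, sgn u j * (L * a k j))
          ≤ 2 ^ n * Real.exp (L ^ 2 * B ^ 2 / 2) := by
      intro k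
      rw [mgf_sum (fun j => L * a k j)]
      have hcosh : ∏ j, Real.cosh (L * a k j) ≤ Real.exp (L ^ 2 * B ^ 2 / 2) := by
        calc ∏ j, Real.cosh (L * a k j)
            ≤ ∏ j, Real.exp ((L * a k j) ^ 2 / 2) :=
              Finset.prod_le_prod (fun j _ => (Real.cosh_pos _).le)
                (fun j _ => Real.cosh_le_exp_half_sq _)
          _ = Real.exp (∑ j, (L * a k j) ^ 2 / 2) := (Real.exp_sum _ _).symm
          _ ≤ Real.exp (L ^ 2 * B ^ 2 / 2) := by
              apply Real.exp_le_exp.2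
              have : ∑ j, (L * a k j) ^ 2 / 2 = L ^ 2 * (∑ j, a k j ^ 2) / 2 := by
                rw [Finset.mul_sum, Finset.sum_div]
                exact Finset.sum_congr rfl fun j _ => by ring
              rw [this]
              have := sqbound k
              nlinarith [sq_nonneg L]
      exact mul_le_mul_of_nonneg_left hcosh (by positivity)
    calc ∑ k : Fin m, ∑ u : Fin n → Bool, Real.exp (∑ j, sgn u j * (L * a k j))
        ≤ ∑ _k : Fin m, (2:ℝ) ^ n * Real.exp (L ^ 2 * B ^ 2 / 2) :=
          Finset.sum_le_sum fun k _ => hk k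
      _ = m * 2 ^ n * Real.exp (L ^ 2 * B ^ 2 / 2) := by
          rw [Finset.sum_const, Finset.card_univ, Fintype.card_fin, nsmul_eq_mul]; ring
  have h2n : (0:ℝ) < 2 ^ n := by positivity
  have jensen : Real.exp (L * ((∑ u, g u) / 2 ^ n)) ≤ (∑ u, Real.exp (L * g u)) / 2 ^ n := by
    have h := convexOn_exp.map_sum_le (t := (univ : Finset (Fin n → Bool)))
      (w := fun _ => ((2:ℝ) ^ n)⁻¹) (p := fun u => L * g u)
      (fun _ _ => by positivity)
      (by rw [Finset.sum_const, Finset.card_univ]; simp [nsmul_eq_mul, mul_inv_cancel₀ h2n.ne'])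
      (fun _ _ => Set.mem_univ _)
    have e1 : L * ((∑ u, g u) / 2 ^ n)
        = ∑ u : Fin n → Bool, ((2:ℝ) ^ n)⁻¹ • (L * g u) := by
      simp only [smul_eq_mul, ← Finset.mul_sum]
      rw [Finset.mul_sum]
      rw [← Finset.mul_sum]
      field_simp
    have e2 : (∑ u, Real.exp (L * g u)) / 2 ^ n
        = ∑ u : Fin n → Bool, ((2:ℝ) ^ n)⁻¹ * Real.exp (L * g u) := by
      rw [← Finset.mul_sum, div_eq_inv_mul]
    rw [e1, e2]
    exact h
  have hm' : (0:ℝ) < m := by exact_mod_cast hm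
  have chain : Real.exp (L * ((∑ u, g u) / 2 ^ n)) ≤ m * Real.exp (L ^ 2 * B ^ 2 / 2) := by
    calc Real.exp (L * ((∑ u, g u) / 2 ^ n)) ≤ (∑ u, Real.exp (L * g u)) / 2 ^ n := jensen
      _ ≤ (∑ u : Fin n → Bool, ∑ k : Fin m, Real.exp (∑ j, sgn u j * (L * a k j))) / 2 ^ n := by
          gcongr with u hu
          exact step1 u
      _ ≤ (m * 2 ^ n * Real.exp (L ^ 2 * B ^ 2 / 2)) / 2 ^ n := by
          gcongr
      _ = m * Real.exp (L ^ 2 * B ^ 2 / 2) := by field_simp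
  have hlog : L * ((∑ u, g u) / 2 ^ n) ≤ Real.log m + L ^ 2 * B ^ 2 / 2 := by
    have h := (Real.le_log_iff_exp_le (by positivity)).2 chain
    rwa [Real.log_mul hm'.ne' (Real.exp_ne_zero _), Real.log_exp] at h
  have hfin : (∑ u, g u) / 2 ^ n ≤ (Real.log m + L ^ 2 * B ^ 2 / 2) / L := by
    rw [le_div_iff₀ hL]
    linarith [hlog]
  calc (∑ u, g u) / 2 ^ n ≤ (Real.log m + L ^ 2 * B ^ 2 / 2) / L := hfin
    _ = Real.log m / L + L * B ^ 2 / 2 := by field_simp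

/-- Massart's lemma: the expected maximum of Rademacher averages over a finite set of
vectors is bounded by the maximal Euclidean norm times `√(2 log m)`. -/
theorem massart {n m : ℕ} (hm : 0 < m) (a : Fin m → Fin n → ℝ) :
    (∑ u : Fin n → Bool,
        (univ.sup' (⟨⟨0, hm⟩, mem_univ _⟩ : (univ : Finset (Fin m)).Nonempty)
          fun k => ∑ j, sgn u j * a k j)) / 2 ^ n
      ≤ (univ.sup' (⟨⟨0, hm⟩, mem_univ _⟩ : (univ : Finset (Fin m)).Nonempty)
          fun k => Real.sqrt (∑ j, a k j ^ 2)) * Real.sqrt (2 * Real.log m) := by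
  classical
  set N : (univ : Finset (Fin m)).Nonempty := ⟨⟨0, hm⟩, mem_univ _⟩ with hN
  set B := univ.sup' N fun k => Real.sqrt (∑ j, a k j ^ 2) with hBdef
  have hBk : ∀ k, Real.sqrt (∑ j, a k j ^ 2) ≤ B := fun k =>
    Finset.le_sup' (f := fun k => Real.sqrt (∑ j, a k j ^ 2)) (mem_univ k)
  have hB0 : 0 ≤ B := le_trans (Real.sqrt_nonneg _) (hBk ⟨0, hm⟩)
  rcases eq_or_lt_of_le hB0 with hB | hB
  · -- B = 0 : all coefficients vanish
    have hz : ∀ k j, a k j = 0 := by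
      intro k j
      have h1 : Real.sqrt (∑ j, a k j ^ 2) = 0 :=
        le_antisymm (hB ▸ hBk k) (Real.sqrt_nonneg _)
      have h2 : ∑ j, a k j ^ 2 = 0 := by
        have := Real.sqrt_eq_zero (Finset.sum_nonneg fun j _ => sq_nonneg _) |>.1 h1
        exact this
      have := (Finset.sum_eq_zero_iff_of_nonneg fun j _ => sq_nonneg (a k j)).1 h2 j (mem_univ j)
      exact sq_eq_zero_iff.1 this
    have hsum0 : ∀ u : Fin n → Bool, (univ.sup' N fun k => ∑ j, sgn u j * a k j) = 0 := by
      intro u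
      have he : (fun k : Fin m => ∑ j, sgn u j * a k j) = fun _ => (0 : ℝ) :=
        funext fun k => by simp [hz]
      rw [he, Finset.sup'_const]
    rw [Finset.sum_congr rfl fun u _ => hsum0 u]
    simp [← hB]
  · by_cases hm1 : m = 1
    · subst hm1
      have hsup : ∀ u : Fin n → Bool,
          (univ.sup' N fun k => ∑ j, sgn u j * a k j) = ∑ j, sgn u j * a 0 j := by
        intro u
        have he : (fun k : Fin 1 => ∑ j, sgn u j * a k j)
            = fun _ => ∑ j, sgn u j * a 0 j :=
          funext fun k => by rw [Subsingleton.elim k 0]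
        rw [he, Finset.sup'_const]
      rw [Finset.sum_congr rfl fun u _ => hsup u, Finset.sum_comm]
      have : ∀ j : Fin n, ∑ u : Fin n → Bool, sgn u j * a 0 j = 0 := by
        intro j
        rw [← Finset.sum_mul, sum_sgn, zero_mul]
      rw [Finset.sum_congr rfl fun j _ => this j]
      simp
    · have hm2 : 2 ≤ m := by omega
      have hm1' : (1 : ℝ) < m := by exact_mod_cast (by omega : 1 < m)
      have hlogm : 0 < Real.log m := Real.log_pos hm1'
      set t := Real.sqrt (2 * Real.log m) with htdef
      have ht : 0 < t := Real.sqrt_pos.2 (by linarith)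
      have ht2 : t ^ 2 = 2 * Real.log m := Real.sq_sqrt (by linarith)
      have hL : 0 < t / B := div_pos ht hB
      have key := massart_aux hm N a hL hB0 hBk
      refine key.trans (le_of_eq ?_)
      have hlm : Real.log m = t ^ 2 / 2 := by linarith
      rw [hlm]
      field_simp
      ring
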